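/- arXiv:2104.11659 — 4 statements merged into one kernel-verified Lean document; each statement's English description precedes it below -/
import Mathlib

section
/- Let Ω ⊆ ℝ² be open, u : Ω → ℝ three times continuously differentiable, f : Ω → ℝ continuously differentiable, with f ≠ 0 and u_yy ≠ 0 everywhere on Ω and u_xx·u_yy − u_xy² + f² = 0 on Ω. Define a := (−u_xy + f)/u_yy and b := (−u_xy − f)/u_yy on Ω. Then at every point of Ω the directional derivative of b along the α-characteristic direction satisfies b_x + a·b_y = −(f_x + b·f_y)/u_yy = ((b − a)/(2·f))·(f_x + b·f_y). -/
/-- Partial derivative in the `x`-direction of a function of two real variables. -/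
noncomputable def pdx (g : ℝ × ℝ → ℝ) (z : ℝ × ℝ) : ℝ := fderiv ℝ g z (1, 0)

/-- Partial derivative in the `y`-direction of a function of two real variables. -/
noncomputable def pdy (g : ℝ × ℝ → ℝ) (z : ℝ × ℝ) : ℝ := fderiv ℝ g z (0, 1)

/-- Slope `a = (−u_xy + f)/u_yy` of the α-characteristics of the hyperbolic
Monge–Ampère equation. -/
noncomputable def slopeA (u f : ℝ × ℝ → ℝ) (z : ℝ × ℝ) : ℝ :=
  (-(pdy (pdx u) z) + f z) / pdy (pdy u) z

/-- Slope `b = (−u_xy − f)/u_yy` of the β-characteristics of the hyperbolic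
Monge–Ampère equation. -/
noncomputable def slopeB (u f : ℝ × ℝ → ℝ) (z : ℝ × ℝ) : ℝ :=
  (-(pdy (pdx u) z) - f z) / pdy (pdy u) z

/-!
Differentiating `t·b + s + f = 0` (the definition of `b`) in `x` and in `y` gives
`t·(b_x + a·b_y) + f_x + b·f_y = −(s_x + (a + b)·t_x + a·b·t_y + (a − b)·f_y)`, using `s_y = t_x`.
Since `t·(a + b) = −2s`, `t·a·b = r` (by the equation) and `t·(a − b) = 2f`, `t` times the
bracket is `r·t_y + t·s_x − 2s·t_x + 2f·f_y`, the `y`-derivative of `r·t − s² + f²` after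
`r_y = s_x` and `s_y = t_x`; so it vanishes. The second form is `(b − a)/(2f) = −1/t`.
-/

open Filter Topology

section Calculus

variable {E F : Type*} [NormedAddCommGroup E] [NormedSpace ℝ E]
  [NormedAddCommGroup F] [NormedSpace ℝ F] {g : E → F} {z : E}

theorem HasFDerivAt.eq_zero_of_eventuallyEq_zero {g' : E →L[ℝ] F} (hg : HasFDerivAt g g' z)
    (h : g =ᶠ[𝓝 z] 0) : g' = 0 :=
  hg.unique ((hasFDerivAt_const 0 z).congr_of_eventuallyEq h)

theorem fderiv_fderiv_apply_comm (hg : ContDiffAt ℝ 2 g z) (v w : E) :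
    fderiv ℝ (fun y => fderiv ℝ g y v) z w = fderiv ℝ (fun y => fderiv ℝ g y w) z v := by
  have hd : DifferentiableAt ℝ (fderiv ℝ g) z :=
    (hg.fderiv_right (m := 1) le_rfl).differentiableAt one_ne_zero
  rw [fderiv_clm_apply hd (differentiableAt_const v),
    fderiv_clm_apply hd (differentiableAt_const w)]
  simpa using hg.isSymmSndFDerivAt (by simp) w v

theorem ContDiffOn.fderiv_apply_of_isOpen {Ω : Set E} {m n : WithTop ℕ∞}
    (hg : ContDiffOn ℝ n g Ω) (hΩ : IsOpen Ω) (hmn : m + 1 ≤ n) (v : E) :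
    ContDiffOn ℝ m (fun y => fderiv ℝ g y v) Ω :=
  (hg.fderiv_of_isOpen hΩ hmn).clm_apply contDiffOn_const

theorem ContDiffOn.differentiableAt_fderiv_apply_fderiv_apply {Ω : Set E}
    (hg : ContDiffOn ℝ 3 g Ω) (hΩ : IsOpen Ω) (hz : z ∈ Ω) (v w : E) :
    DifferentiableAt ℝ (fun y => fderiv ℝ (fun y' => fderiv ℝ g y' v) y w) z := by
  have hgv : ContDiffOn ℝ 2 (fun y => fderiv ℝ g y v) Ω :=
    hg.fderiv_apply_of_isOpen hΩ (by norm_num) v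
  exact ((hgv.fderiv_apply_of_isOpen hΩ le_rfl w).contDiffAt (hΩ.mem_nhds hz)).differentiableAt
    one_ne_zero

variable {T B S F R : E → ℝ}

theorem fderiv_of_eventually_mul_add_add_eq_zero (hT : DifferentiableAt ℝ T z)
    (hB : DifferentiableAt ℝ B z) (hS : DifferentiableAt ℝ S z) (hF : DifferentiableAt ℝ F z)
    (h : ∀ᶠ w in 𝓝 z, T w * B w + S w + F w = 0) (v : E) :
    T z * fderiv ℝ B z v + B z * fderiv ℝ T z v + fderiv ℝ S z v + fderiv ℝ F z v = 0 := by
  have hD := ((hT.hasFDerivAt.mul hB.hasFDerivAt).add hS.hasFDerivAt).add hF.hasFDerivAt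
  simpa using congrArg (· v) (hD.eq_zero_of_eventuallyEq_zero h)

theorem fderiv_of_eventually_mul_sub_sq_add_sq_eq_zero (hR : DifferentiableAt ℝ R z)
    (hT : DifferentiableAt ℝ T z) (hS : DifferentiableAt ℝ S z) (hF : DifferentiableAt ℝ F z)
    (h : ∀ᶠ w in 𝓝 z, R w * T w - S w ^ 2 + F w ^ 2 = 0) (v : E) :
    R z * fderiv ℝ T z v + T z * fderiv ℝ R z v - 2 * S z * fderiv ℝ S z v
      + 2 * F z * fderiv ℝ F z v = 0 := by
  have hD := ((hR.hasFDerivAt.mul hT.hasFDerivAt).sub (hS.hasFDerivAt.pow 2)).add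
    (hF.hasFDerivAt.pow 2)
  have hv := congrArg (· v) (hD.eq_zero_of_eventuallyEq_zero h)
  simp only [Nat.add_one_sub_one, pow_one, nsmul_eq_mul, Nat.cast_ofNat, add_apply, sub_apply,
    smul_apply, smul_eq_mul, zero_apply] at hv
  linear_combination hv

end Calculus

section MongeAmpere

variable {Ω : Set (ℝ × ℝ)} {u f : ℝ × ℝ → ℝ} {z : ℝ × ℝ}

theorem pdy_pdx_eq_pdx_pdy (hu : ContDiffAt ℝ 2 u z) : pdy (pdx u) z = pdx (pdy u) z :=
  fderiv_fderiv_apply_comm hu _ _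

theorem pdy_pdy_pdx_eq_pdx_pdy_pdy (hΩ : IsOpen Ω) (hu : ContDiffOn ℝ 3 u Ω) (hz : z ∈ Ω) :
    pdy (pdy (pdx u)) z = pdx (pdy (pdy u)) z := by
  have hsymm : pdy (pdx u) =ᶠ[𝓝 z] pdx (pdy u) := by
    filter_upwards [hΩ.mem_nhds hz] with w hw
    exact pdy_pdx_eq_pdx_pdy ((hu.contDiffAt (hΩ.mem_nhds hw)).of_le (by norm_num))
  calc pdy (pdy (pdx u)) z = pdy (pdx (pdy u)) z := by rw [pdy, pdy, hsymm.fderiv_eq]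
    _ = pdx (pdy (pdy u)) z :=
      pdy_pdx_eq_pdx_pdy ((hu.fderiv_apply_of_isOpen hΩ (by norm_num) _).contDiffAt
        (hΩ.mem_nhds hz))

theorem pdy_pdy_mul_slopeB_add (ht : pdy (pdy u) z ≠ 0) :
    pdy (pdy u) z * slopeB u f z + pdy (pdx u) z + f z = 0 := by
  rw [slopeB]
  field_simp
  ring

theorem slopeB_sub_slopeA_div (hf : f z ≠ 0) :
    (slopeB u f z - slopeA u f z) / (2 * f z) = -1 / pdy (pdy u) z := by
  rw [slopeA, slopeB]
  field_simp
  ring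

theorem pdy_mongeAmpere_eq_zero (hΩ : IsOpen Ω) (hu : ContDiffOn ℝ 3 u Ω)
    (hf : ContDiffOn ℝ 1 f Ω)
    (hMA : ∀ w ∈ Ω, pdx (pdx u) w * pdy (pdy u) w - pdy (pdx u) w ^ 2 + f w ^ 2 = 0)
    (hz : z ∈ Ω) :
    pdx (pdx u) z * pdy (pdy (pdy u)) z + pdy (pdy u) z * pdx (pdy (pdx u)) z
      - 2 * pdy (pdx u) z * pdx (pdy (pdy u)) z + 2 * f z * pdy f z = 0 := by
  have hMAy : pdx (pdx u) z * pdy (pdy (pdy u)) z + pdy (pdy u) z * pdy (pdx (pdx u)) z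
      - 2 * pdy (pdx u) z * pdy (pdy (pdx u)) z + 2 * f z * pdy f z = 0 :=
    fderiv_of_eventually_mul_sub_sq_add_sq_eq_zero
      (hu.differentiableAt_fderiv_apply_fderiv_apply hΩ hz _ _)
      (hu.differentiableAt_fderiv_apply_fderiv_apply hΩ hz _ _)
      (hu.differentiableAt_fderiv_apply_fderiv_apply hΩ hz _ _)
      ((hf.contDiffAt (hΩ.mem_nhds hz)).differentiableAt one_ne_zero)
      (eventually_of_mem (hΩ.mem_nhds hz) hMA) _
  have hux : ContDiffOn ℝ 2 (pdx u) Ω := hu.fderiv_apply_of_isOpen hΩ (by norm_num) _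
  rwa [pdy_pdx_eq_pdx_pdy (hux.contDiffAt (hΩ.mem_nhds hz)),
    pdy_pdy_pdx_eq_pdx_pdy_pdy hΩ hu hz] at hMAy

theorem slopeB_relation_fderiv (hΩ : IsOpen Ω) (hu : ContDiffOn ℝ 3 u Ω)
    (hf : ContDiffOn ℝ 1 f Ω) (ht : ∀ w ∈ Ω, pdy (pdy u) w ≠ 0) (hz : z ∈ Ω)
    (v : ℝ × ℝ) :
    pdy (pdy u) z * fderiv ℝ (slopeB u f) z v + slopeB u f z * fderiv ℝ (pdy (pdy u)) z v
      + fderiv ℝ (pdy (pdx u)) z v + fderiv ℝ f z v = 0 := by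
  have hs : DifferentiableAt ℝ (pdy (pdx u)) z :=
    hu.differentiableAt_fderiv_apply_fderiv_apply hΩ hz _ _
  have htt : DifferentiableAt ℝ (pdy (pdy u)) z :=
    hu.differentiableAt_fderiv_apply_fderiv_apply hΩ hz _ _
  have hfz : DifferentiableAt ℝ f z :=
    (hf.contDiffAt (hΩ.mem_nhds hz)).differentiableAt one_ne_zero
  have hb : DifferentiableAt ℝ (slopeB u f) z := by
    unfold slopeB
    simp only [div_eq_mul_inv]
    exact (hs.neg.sub hfz).mul (htt.inv (ht z hz))
  exact fderiv_of_eventually_mul_add_add_eq_zero htt hb hs hfz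
    (eventually_of_mem (hΩ.mem_nhds hz) fun w hw => pdy_pdy_mul_slopeB_add (ht w hw)) v

end MongeAmpere

theorem add_slope_mul_eq_neg_div_of_relations {r s t f sx tx ty fx fy bx by' a b : ℝ}
    (ht : t ≠ 0) (ha : a = (-s + f) / t) (hb : b = (-s - f) / t)
    (hMA : r * t - s ^ 2 + f ^ 2 = 0)
    (hMAy : r * ty + t * sx - 2 * s * tx + 2 * f * fy = 0)
    (hbx : t * bx + b * tx + sx + fx = 0) (hby : t * by' + b * ty + tx + fy = 0) :
    bx + a * by' = -((fx + b * fy) / t) := by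
  replace ha : t * a = -s + f := by rw [ha]; field_simp
  replace hb : t * b = -s - f := by rw [hb]; field_simp
  have hab : t * (a * b) = r := by
    apply mul_left_cancel₀ ht
    linear_combination (t * b) * ha + (-s + f) * hb - hMA
  have hcombination : sx + (a + b) * tx + a * b * ty + (a - b) * fy = 0 := by
    apply mul_left_cancel₀ ht
    linear_combination hMAy + tx * (ha + hb) + ty * hab + fy * (ha - hb)
  field_simp
  linear_combination hbx + a * hby - hcombination

/-- Evolution of the slope `b` of the β-characteristic family along the
α-characteristics of the hyperbolic Monge–Ampère equation:
`b_x + a·b_y = −(f_x + b·f_y)/u_yy = ((b − a)/(2f))·(f_x + b·f_y)`. -/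
theorem monge_ampere_evolution_b_along_alpha
    (Ω : Set (ℝ × ℝ)) (hΩ : IsOpen Ω)
    (u f : ℝ × ℝ → ℝ)
    (hu : ContDiffOn ℝ 3 u Ω) (hf : ContDiffOn ℝ 1 f Ω)
    (hf0 : ∀ z ∈ Ω, f z ≠ 0) (ht : ∀ z ∈ Ω, pdy (pdy u) z ≠ 0)
    (hMA : ∀ z ∈ Ω, pdx (pdx u) z * pdy (pdy u) z - pdy (pdx u) z ^ 2 + f z ^ 2 = 0) :
    ∀ z ∈ Ω,
      pdx (slopeB u f) z + slopeA u f z * pdy (slopeB u f) z =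
        -((pdx f z + slopeB u f z * pdy f z) / pdy (pdy u) z) ∧
      pdx (slopeB u f) z + slopeA u f z * pdy (slopeB u f) z =
        ((slopeB u f z - slopeA u f z) / (2 * f z)) *
          (pdx f z + slopeB u f z * pdy f z) := by
  intro z hz
  have hbx : pdy (pdy u) z * pdx (slopeB u f) z + slopeB u f z * pdx (pdy (pdy u)) z
      + pdx (pdy (pdx u)) z + pdx f z = 0 :=
    slopeB_relation_fderiv hΩ hu hf ht hz _
  have hby : pdy (pdy u) z * pdy (slopeB u f) z + slopeB u f z * pdy (pdy (pdy u)) z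
      + pdy (pdy (pdx u)) z + pdy f z = 0 :=
    slopeB_relation_fderiv hΩ hu hf ht hz _
  rw [pdy_pdy_pdx_eq_pdx_pdy_pdy hΩ hu hz] at hby
  have hevol := add_slope_mul_eq_neg_div_of_relations (a := slopeA u f z) (b := slopeB u f z)
    (ht z hz) rfl rfl (hMA z hz) (pdy_mongeAmpere_eq_zero hΩ hu hf hMA hz) hbx hby
  refine ⟨hevol, ?_⟩
  rw [hevol, slopeB_sub_slopeA_div (hf0 z hz)]
  ring
end

section
/- Let Ω ⊆ ℝ² be open, u : Ω → ℝ three times continuously differentiable, f : Ω → ℝ continuously differentiable, with f ≠ 0 and u_yy ≠ 0 everywhere on Ω and u_xx·u_yy − u_xy² + f² = 0 on Ω. Define a := (−u_xy + f)/u_yy and b := (−u_xy − f)/u_yy on Ω. Then at every point of Ω the directional derivative of a along the β-characteristic direction satisfies a_x + b·a_y = (f_x + a·f_y)/u_yy = ((a − b)/(2·f))·(f_x + a·f_y). -/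
/-! By the quotient rule, `a_x` and `a_y` are expressed through third derivatives of `u` and
first derivatives of `f`. After the Clairaut identities `u_xyx = u_xxy` and `u_yyx = u_xyy`,
the third derivatives enter `a_x + b·a_y` only through the combination that occurs in the
`y`-derivative of the Monge–Ampère equation, because `a` and `b` are the roots of
`u_yy·λ² + 2u_xy·λ + u_xx`. Eliminating it leaves `(f_x + a·f_y)/u_yy`, and the second form
follows from `a − b = 2f/u_yy`. -/

open Filter Topology

lemma fderiv_div_apply {E : Type*} [NormedAddCommGroup E] [NormedSpace ℝ E]
    {p q : E → ℝ} {z : E} (hp : DifferentiableAt ℝ p z) (hq : DifferentiableAt ℝ q z)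
    (hq0 : q z ≠ 0) (v : E) :
    fderiv ℝ (fun w => p w / q w) z v =
      (fderiv ℝ p z v - p z / q z * fderiv ℝ q z v) / q z := by
  have hinv : HasFDerivAt (fun w => (q w)⁻¹) (-(q z ^ 2)⁻¹ • fderiv ℝ q z) z :=
    (hasDerivAt_inv hq0).comp_hasFDerivAt z hq.hasFDerivAt
  have hdiv := hp.hasFDerivAt.fun_mul hinv
  simp only [← div_eq_mul_inv] at hdiv
  rw [hdiv.fderiv]
  simp only [neg_smul, smul_neg, add_apply, neg_apply, smul_apply, smul_eq_mul]
  field_simp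
  ring

section Partials

variable {Ω : Set (ℝ × ℝ)} {g : ℝ × ℝ → ℝ} {z : ℝ × ℝ}

lemma ContDiffOn.pdx_of_isOpen {m n : WithTop ℕ∞} (hg : ContDiffOn ℝ n g Ω) (hΩ : IsOpen Ω)
    (hmn : m + 1 ≤ n) : ContDiffOn ℝ m (pdx g) Ω :=
  (ContinuousLinearMap.apply ℝ ℝ ((1, 0) : ℝ × ℝ)).contDiff.comp_contDiffOn
    (hg.fderiv_of_isOpen hΩ hmn)

lemma ContDiffOn.pdy_of_isOpen {m n : WithTop ℕ∞} (hg : ContDiffOn ℝ n g Ω) (hΩ : IsOpen Ω)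
    (hmn : m + 1 ≤ n) : ContDiffOn ℝ m (pdy g) Ω :=
  (ContinuousLinearMap.apply ℝ ℝ ((0, 1) : ℝ × ℝ)).contDiff.comp_contDiffOn
    (hg.fderiv_of_isOpen hΩ hmn)

lemma pdx_pdy_comm (hg : ContDiffOn ℝ 2 g Ω) (hΩ : IsOpen Ω) (hz : z ∈ Ω) :
    pdx (pdy g) z = pdy (pdx g) z := by
  have hnhds : Ω ∈ 𝓝 z := hΩ.mem_nhds hz
  have hd : DifferentiableAt ℝ (fderiv ℝ g) z :=
    ((hg.fderiv_of_isOpen hΩ le_rfl).contDiffAt hnhds).differentiableAt one_ne_zero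
  have hsymm : IsSymmSndFDerivAt ℝ g z := (hg.contDiffAt hnhds).isSymmSndFDerivAt (by simp)
  show fderiv ℝ (fun x => fderiv ℝ g x (0, 1)) z (1, 0) =
    fderiv ℝ (fun x => fderiv ℝ g x (1, 0)) z (0, 1)
  rw [fderiv_clm_apply hd (differentiableAt_const _),
    fderiv_clm_apply hd (differentiableAt_const _)]
  simp [hsymm.eq]

lemma pdx_pdy_eventuallyEq (hg : ContDiffOn ℝ 2 g Ω) (hΩ : IsOpen Ω) (hz : z ∈ Ω) :
    pdx (pdy g) =ᶠ[𝓝 z] pdy (pdx g) :=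
  eventually_of_mem (hΩ.mem_nhds hz) fun _ hw => pdx_pdy_comm hg hΩ hw

lemma pdx_pdy_pdy_eq (hg : ContDiffOn ℝ 3 g Ω) (hΩ : IsOpen Ω) (hz : z ∈ Ω) :
    pdx (pdy (pdy g)) z = pdy (pdy (pdx g)) z := by
  rw [pdx_pdy_comm (hg.pdy_of_isOpen hΩ (by norm_num)) hΩ hz]
  show fderiv ℝ (pdx (pdy g)) z (0, 1) = fderiv ℝ (pdy (pdx g)) z (0, 1)
  rw [(pdx_pdy_eventuallyEq (hg.of_le (by norm_num)) hΩ hz).fderiv_eq]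

lemma ContDiffOn.differentiableAt_secondPartials (hg : ContDiffOn ℝ 3 g Ω) (hΩ : IsOpen Ω)
    (hz : z ∈ Ω) :
    DifferentiableAt ℝ (pdx (pdx g)) z ∧ DifferentiableAt ℝ (pdy (pdx g)) z ∧
      DifferentiableAt ℝ (pdy (pdy g)) z := by
  have hgx : ContDiffOn ℝ 2 (pdx g) Ω := hg.pdx_of_isOpen hΩ (by norm_num)
  have hgy : ContDiffOn ℝ 2 (pdy g) Ω := hg.pdy_of_isOpen hΩ (by norm_num)
  have hC1 {h : ℝ × ℝ → ℝ} (hh : ContDiffOn ℝ 1 h Ω) : DifferentiableAt ℝ h z :=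
    hh.differentiableOn_one.differentiableAt (hΩ.mem_nhds hz)
  exact ⟨hC1 (hgx.pdx_of_isOpen hΩ (by norm_num)), hC1 (hgx.pdy_of_isOpen hΩ (by norm_num)),
    hC1 (hgy.pdy_of_isOpen hΩ (by norm_num))⟩

end Partials

lemma fderiv_mongeAmpere_apply_eq_zero {R S T F : ℝ × ℝ → ℝ} {z : ℝ × ℝ}
    (hR : DifferentiableAt ℝ R z) (hS : DifferentiableAt ℝ S z)
    (hT : DifferentiableAt ℝ T z) (hF : DifferentiableAt ℝ F z)
    (hMA : (fun w => R w * T w - S w ^ 2 + F w ^ 2) =ᶠ[𝓝 z] fun _ => 0) (v : ℝ × ℝ) :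
    fderiv ℝ R z v * T z + R z * fderiv ℝ T z v - 2 * S z * fderiv ℝ S z v
      + 2 * F z * fderiv ℝ F z v = 0 := by
  have hG := ((hR.hasFDerivAt.fun_mul hT.hasFDerivAt).fun_sub
    (hS.hasFDerivAt.pow 2)).fun_add (hF.hasFDerivAt.pow 2)
  have h0 : fderiv ℝ (fun w => R w * T w - S w ^ 2 + F w ^ 2) z v = 0 := by
    simp [hMA.fderiv_eq]
  rw [hG.fderiv] at h0
  simp only [Nat.add_one_sub_one, pow_one, nsmul_eq_mul, Nat.cast_ofNat, add_apply, sub_apply,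
    smul_apply, smul_eq_mul] at h0
  linear_combination h0

lemma fderiv_slopeA_apply {u f : ℝ × ℝ → ℝ} {z : ℝ × ℝ}
    (hS : DifferentiableAt ℝ (pdy (pdx u)) z) (hT : DifferentiableAt ℝ (pdy (pdy u)) z)
    (hf : DifferentiableAt ℝ f z) (ht : pdy (pdy u) z ≠ 0) (v : ℝ × ℝ) :
    fderiv ℝ (slopeA u f) z v = (-fderiv ℝ (pdy (pdx u)) z v + fderiv ℝ f z v
      - slopeA u f z * fderiv ℝ (pdy (pdy u)) z v) / pdy (pdy u) z := by
  have h := fderiv_div_apply (hS.fun_neg.fun_add hf) hT ht v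
  rw [fderiv_fun_add hS.fun_neg hf, fderiv_fun_neg] at h
  simp only [add_apply, neg_apply] at h
  exact h

lemma slopeA_sub_slopeB (u f : ℝ × ℝ → ℝ) (z : ℝ × ℝ) :
    slopeA u f z - slopeB u f z = 2 * f z / pdy (pdy u) z := by
  simp only [slopeA, slopeB]
  ring

lemma mongeAmpere_slope_transport {r s t f a b rY sY tY fX fY aX aY : ℝ} (ht : t ≠ 0)
    (ha : a = (-s + f) / t) (hb : b = (-s - f) / t) (hMA : r * t - s ^ 2 + f ^ 2 = 0)
    (hMAy : rY * t + r * tY - 2 * s * sY + 2 * f * fY = 0)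
    (haX : aX = (-rY + fX - a * sY) / t) (haY : aY = (-sY + fY - a * tY) / t) :
    aX + b * aY = (fX + a * fY) / t := by
  subst ha hb haX haY
  field_simp
  linear_combination (-t) * hMAy + tY * hMA

/-- Evolution of the slope `a` of the α-characteristic family along the
β-characteristics of the hyperbolic Monge–Ampère equation:
`a_x + b·a_y = (f_x + a·f_y)/u_yy = ((a − b)/(2f))·(f_x + a·f_y)`. -/
theorem monge_ampere_evolution_a_along_beta
    (Ω : Set (ℝ × ℝ)) (hΩ : IsOpen Ω)
    (u f : ℝ × ℝ → ℝ)
    (hu : ContDiffOn ℝ 3 u Ω) (hf : ContDiffOn ℝ 1 f Ω)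
    (hf0 : ∀ z ∈ Ω, f z ≠ 0) (ht : ∀ z ∈ Ω, pdy (pdy u) z ≠ 0)
    (hMA : ∀ z ∈ Ω, pdx (pdx u) z * pdy (pdy u) z - pdy (pdx u) z ^ 2 + f z ^ 2 = 0) :
    ∀ z ∈ Ω,
      pdx (slopeA u f) z + slopeB u f z * pdy (slopeA u f) z =
        (pdx f z + slopeA u f z * pdy f z) / pdy (pdy u) z ∧
      pdx (slopeA u f) z + slopeB u f z * pdy (slopeA u f) z =
        ((slopeA u f z - slopeB u f z) / (2 * f z)) *
          (pdx f z + slopeA u f z * pdy f z) := by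
  intro z hz
  have hnhds : Ω ∈ 𝓝 z := hΩ.mem_nhds hz
  obtain ⟨hR, hS, hT⟩ := hu.differentiableAt_secondPartials hΩ hz
  have hfz : DifferentiableAt ℝ f z := hf.differentiableOn_one.differentiableAt hnhds
  have hMAy := fderiv_mongeAmpere_apply_eq_zero hR hS hT hfz
    (eventually_of_mem hnhds hMA) ((0, 1) : ℝ × ℝ)
  have haX : pdx (slopeA u f) z =
      (-pdy (pdx (pdx u)) z + pdx f z - slopeA u f z * pdy (pdy (pdx u)) z) / pdy (pdy u) z := by
    rw [← pdx_pdy_comm (hu.pdx_of_isOpen hΩ (by norm_num)) hΩ hz, ← pdx_pdy_pdy_eq hu hΩ hz]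
    exact fderiv_slopeA_apply hS hT hfz (ht z hz) (1, 0)
  have htransport : pdx (slopeA u f) z + slopeB u f z * pdy (slopeA u f) z =
      (pdx f z + slopeA u f z * pdy f z) / pdy (pdy u) z :=
    mongeAmpere_slope_transport (ht z hz) rfl rfl (hMA z hz) hMAy haX
      (fderiv_slopeA_apply hS hT hfz (ht z hz) (0, 1))
  refine ⟨htransport, ?_⟩
  rw [htransport, slopeA_sub_slopeB]
  field_simp [hf0 z hz]
end

section
/- Let x₁ < x₂ and y₁ < y₂ be real numbers, let U ⊆ ℝ² be an open set containing the closed rectangle [x₁,x₂] × [y₁,y₂], let u : U → ℝ be three times continuously differentiable and f : U → ℝ continuous with u_xx·u_yy − u_xy² + f² = 0 on U. Write p = u_x and q = u_y. Then ∫_{x₁}^{x₂} ∫_{y₁}^{y₂} f(x,y)² dy dx = −( ∫_{x₁}^{x₂} p(x,y₁)·q_x(x,y₁) dx + ∫_{y₁}^{y₂} p(x₂,y)·q_y(x₂,y) dy − ∫_{x₁}^{x₂} p(x,y₂)·q_x(x,y₂) dx − ∫_{y₁}^{y₂} p(x₁,y)·q_y(x₁,y) dy ). -/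
/-!
With `p = u_x`, `q = u_y`, the vector field `(-p q_y, p q_x)` has divergence
`-p_x q_y + p_y q_x + p (q_xy - q_yx) = u_xy² - u_xx u_yy`, which is `f²` by the equation
(the symmetry of second derivatives is used twice). Green's theorem on the rectangle turns the
area integral of this divergence into the boundary integrals.
-/

open Set MeasureTheory

section

variable {U : Set (ℝ × ℝ)} {g h : ℝ × ℝ → ℝ} {z : ℝ × ℝ}

theorem ContDiffOn.pdx {m n : WithTop ℕ∞} (hg : ContDiffOn ℝ n g U) (hU : IsOpen U)
    (hmn : m + 1 ≤ n) : ContDiffOn ℝ m (pdx g) U :=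
  (hg.fderiv_of_isOpen hU hmn).clm_apply contDiffOn_const

theorem ContDiffOn.pdy {m n : WithTop ℕ∞} (hg : ContDiffOn ℝ n g U) (hU : IsOpen U)
    (hmn : m + 1 ≤ n) : ContDiffOn ℝ m (pdy g) U :=
  (hg.fderiv_of_isOpen hU hmn).clm_apply contDiffOn_const

theorem pdx_neg : pdx (fun w => -g w) z = -pdx g z := by
  rw [pdx, pdx, fderiv_fun_neg, neg_apply]

theorem pdx_mul (hg : DifferentiableAt ℝ g z) (hh : DifferentiableAt ℝ h z) :
    pdx (fun w => g w * h w) z = pdx g z * h z + g z * pdx h z := by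
  rw [pdx, pdx, pdx, fderiv_fun_mul hg hh, add_apply, smul_apply, smul_apply, smul_eq_mul,
    smul_eq_mul]
  ring

theorem pdy_mul (hg : DifferentiableAt ℝ g z) (hh : DifferentiableAt ℝ h z) :
    pdy (fun w => g w * h w) z = pdy g z * h z + g z * pdy h z := by
  rw [pdy, pdy, pdy, fderiv_fun_mul hg hh, add_apply, smul_apply, smul_apply, smul_eq_mul,
    smul_eq_mul]
  ring

theorem fderiv_fderiv_apply (hd : DifferentiableAt ℝ (fderiv ℝ g) z) (v w : ℝ × ℝ) :
    fderiv ℝ (fun y => fderiv ℝ g y v) z w = fderiv ℝ (fderiv ℝ g) z w v := by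
  rw [fderiv_clm_apply hd (differentiableAt_const v), fderiv_fun_const, Pi.zero_apply,
    ContinuousLinearMap.comp_zero, zero_add, ContinuousLinearMap.flip_apply]

theorem pdy_pdx_eq_pdx_pdy_s15 (hU : IsOpen U) (hg : ContDiffOn ℝ 2 g U) (hz : z ∈ U) :
    pdy (pdx g) z = pdx (pdy g) z := by
  have hgz : ContDiffAt ℝ 2 g z := hg.contDiffAt (hU.mem_nhds hz)
  have hd : DifferentiableAt ℝ (fderiv ℝ g) z :=
    (hgz.fderiv_right (m := 1) le_rfl).differentiableAt one_ne_zero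
  change fderiv ℝ (fun y => fderiv ℝ g y (1, 0)) z (0, 1) =
    fderiv ℝ (fun y => fderiv ℝ g y (0, 1)) z (1, 0)
  rw [fderiv_fderiv_apply hd, fderiv_fderiv_apply hd]
  exact hgz.isSymmSndFDerivAt (by simp) _ _

theorem integral2_pdx_add_pdy_eq_of_contDiffOn {F G : ℝ × ℝ → ℝ} {a₁ b₁ a₂ b₂ : ℝ}
    (hU : IsOpen U) (hF : ContDiffOn ℝ 1 F U) (hG : ContDiffOn ℝ 1 G U)
    (hR : uIcc a₁ b₁ ×ˢ uIcc a₂ b₂ ⊆ U) :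
    (∫ x in a₁..b₁, ∫ y in a₂..b₂, pdx F (x, y) + pdy G (x, y)) =
      (((∫ x in a₁..b₁, G (x, b₂)) - ∫ x in a₁..b₁, G (x, a₂)) + ∫ y in a₂..b₂, F (b₁, y)) -
        ∫ y in a₂..b₂, F (a₁, y) := by
  have hasFDerivAt_of_contDiffOn {H : ℝ × ℝ → ℝ} (hH : ContDiffOn ℝ 1 H U) :
      ∀ z ∈ Ioo (min a₁ b₁) (max a₁ b₁) ×ˢ Ioo (min a₂ b₂) (max a₂ b₂) \ ∅,
        HasFDerivAt H (fderiv ℝ H z) z := fun z hz =>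
    ((hH.differentiableOn one_ne_zero).differentiableAt <| hU.mem_nhds <|
      hR ⟨Ioo_subset_Icc_self hz.1.1, Ioo_subset_Icc_self hz.1.2⟩).hasFDerivAt
  have hdiv : ContinuousOn (fun z => pdx F z + pdy G z) (uIcc a₁ b₁ ×ˢ uIcc a₂ b₂) :=
    ((hF.pdx (m := 0) hU le_rfl).continuousOn.add
      (hG.pdy (m := 0) hU le_rfl).continuousOn).mono hR
  exact integral2_divergence_prod_of_hasFDerivAt_off_countable F G (fderiv ℝ F) (fderiv ℝ G)
    a₁ a₂ b₁ b₂ ∅ countable_empty (hF.continuousOn.mono hR) (hG.continuousOn.mono hR)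
    (hasFDerivAt_of_contDiffOn hF) (hasFDerivAt_of_contDiffOn hG)
    (hdiv.integrableOn_compact (isCompact_uIcc.prod isCompact_uIcc))

theorem pdx_neg_mul_add_pdy_mul_eq {u : ℝ × ℝ → ℝ}
    (hU : IsOpen U) (hu : ContDiffOn ℝ 3 u U) (hz : z ∈ U) :
    pdx (fun w => -(pdx u w * pdy (pdy u) w)) z + pdy (fun w => pdx u w * pdx (pdy u) w) z =
      pdy (pdx u) z ^ 2 - pdx (pdx u) z * pdy (pdy u) z := by
  have hdiff {g : ℝ × ℝ → ℝ} (hg : ContDiffOn ℝ 1 g U) : DifferentiableAt ℝ g z :=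
    (hg.differentiableOn one_ne_zero).differentiableAt (hU.mem_nhds hz)
  have hp : ContDiffOn ℝ 2 (pdx u) U := hu.pdx hU (by norm_num)
  have hq : ContDiffOn ℝ 2 (pdy u) U := hu.pdy hU (by norm_num)
  rw [pdx_neg, pdx_mul (hdiff (hp.of_le one_le_two)) (hdiff (hq.pdy hU le_rfl)),
    pdy_mul (hdiff (hp.of_le one_le_two)) (hdiff (hq.pdx hU le_rfl)),
    pdy_pdx_eq_pdx_pdy_s15 hU hq hz, ← pdy_pdx_eq_pdx_pdy_s15 hU (hu.of_le (by norm_num)) hz]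
  ring

end

theorem monge_ampere_integral_formulation_general
    (x₁ x₂ y₁ y₂ : ℝ) (hx : x₁ < x₂) (hy : y₁ < y₂)
    (U : Set (ℝ × ℝ)) (hU : IsOpen U)
    (hrect : Set.Icc x₁ x₂ ×ˢ Set.Icc y₁ y₂ ⊆ U)
    (u f : ℝ × ℝ → ℝ) (hu : ContDiffOn ℝ 3 u U)
    (hMA : ∀ z ∈ U, pdx (pdx u) z * pdy (pdy u) z - pdy (pdx u) z ^ 2 + f z ^ 2 = 0) :
    (∫ x in x₁..x₂, ∫ y in y₁..y₂, f (x, y) ^ 2) =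
      -((∫ x in x₁..x₂, pdx u (x, y₁) * pdx (pdy u) (x, y₁)) +
        (∫ y in y₁..y₂, pdx u (x₂, y) * pdy (pdy u) (x₂, y)) -
        (∫ x in x₁..x₂, pdx u (x, y₂) * pdx (pdy u) (x, y₂)) -
        (∫ y in y₁..y₂, pdx u (x₁, y) * pdy (pdy u) (x₁, y))) := by
  have hR : uIcc x₁ x₂ ×ˢ uIcc y₁ y₂ ⊆ U := by rwa [uIcc_of_le hx.le, uIcc_of_le hy.le]
  have hp : ContDiffOn ℝ 1 (pdx u) U := hu.pdx hU (by norm_num)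
  have hq : ContDiffOn ℝ 2 (pdy u) U := hu.pdy hU (by norm_num)
  have hF : ContDiffOn ℝ 1 (fun w => -(pdx u w * pdy (pdy u) w)) U :=
    (hp.mul (hq.pdy hU le_rfl)).neg
  have hG : ContDiffOn ℝ 1 (fun w => pdx u w * pdx (pdy u) w) U := hp.mul (hq.pdx hU le_rfl)
  calc (∫ x in x₁..x₂, ∫ y in y₁..y₂, f (x, y) ^ 2)
      = ∫ x in x₁..x₂, ∫ y in y₁..y₂,
          pdx (fun w => -(pdx u w * pdy (pdy u) w)) (x, y) +
            pdy (fun w => pdx u w * pdx (pdy u) w) (x, y) := by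
        refine intervalIntegral.integral_congr fun x hx' => ?_
        refine intervalIntegral.integral_congr fun y hy' => ?_
        have hz : (x, y) ∈ U := hR ⟨hx', hy'⟩
        simp only [pdx_neg_mul_add_pdy_mul_eq hU hu hz]
        linarith [hMA _ hz]
    _ = _ := integral2_pdx_add_pdy_eq_of_contDiffOn hU hF hG hR
    _ = _ := by
        simp only [intervalIntegral.integral_neg]
        ring

/-- Integral formulation of the hyperbolic Monge–Ampère equation over a
rectangle: `∬ f² = −∮ p·∇q·τ̂ ds`, with `p = u_x`, `q = u_y` and the boundary
integral taken counterclockwise. -/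
theorem monge_ampere_integral_formulation
    (x₁ x₂ y₁ y₂ : ℝ) (hx : x₁ < x₂) (hy : y₁ < y₂)
    (U : Set (ℝ × ℝ)) (hU : IsOpen U)
    (hrect : Set.Icc x₁ x₂ ×ˢ Set.Icc y₁ y₂ ⊆ U)
    (u f : ℝ × ℝ → ℝ) (hu : ContDiffOn ℝ 3 u U) (hf : ContinuousOn f U)
    (hMA : ∀ z ∈ U, pdx (pdx u) z * pdy (pdy u) z - pdy (pdx u) z ^ 2 + f z ^ 2 = 0) :
    (∫ x in x₁..x₂, ∫ y in y₁..y₂, f (x, y) ^ 2) =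
      -((∫ x in x₁..x₂, pdx u (x, y₁) * pdx (pdy u) (x, y₁)) +
        (∫ y in y₁..y₂, pdx u (x₂, y) * pdy (pdy u) (x₂, y)) -
        (∫ x in x₁..x₂, pdx u (x, y₂) * pdx (pdy u) (x, y₂)) -
        (∫ y in y₁..y₂, pdx u (x₁, y) * pdy (pdy u) (x₁, y))) :=
  monge_ampere_integral_formulation_general x₁ x₂ y₁ y₂ hx hy U hU hrect u f hu hMA
end

section
/- Let U ⊆ ℂ be open and let w : ℂ → ℂ be complex analytic on U. Define u(x,y) = Im(w(x + iy)) for (x,y) with x + iy ∈ U. Then at every such point, u_xx·u_yy − u_xy² = −|w''(x + iy)|², so u solves the hyperbolic Monge–Ampère equation u_xx·u_yy − u_xy² + f² = 0 with f(x,y) = |w''(x + iy)|. -/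
/-- The imaginary part of the composition of an analytic function with `x + iy`,
viewed as a function of two real variables. -/
noncomputable def imPart (w : ℂ → ℂ) (z : ℝ × ℝ) : ℝ :=
  (w ((z.1 : ℂ) + (z.2 : ℂ) * Complex.I)).im

/-!
By the Cauchy–Riemann equations, `∂ₓ Im w = Im w'` and `∂_y Im w = Re w' = Im (i w')`, so each
partial derivative of `Im w` is again the imaginary part of an analytic function. Applying this
twice gives `u_xx = Im w''`, `u_xy = Re w''` and `u_yy = Im (i · i w'') = -Im w''`, whence
`u_xx u_yy - u_xy² = -(Im w'')² - (Re w'')² = -|w''|²`.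
-/

open Complex Filter Topology

lemma pdx_congr {f g : ℝ × ℝ → ℝ} {z : ℝ × ℝ} (h : f =ᶠ[𝓝 z] g) : pdx f z = pdx g z := by
  rw [pdx, pdx, h.fderiv_eq]

lemma pdy_congr {f g : ℝ × ℝ → ℝ} {z : ℝ × ℝ} (h : f =ᶠ[𝓝 z] g) : pdy f z = pdy g z := by
  rw [pdy, pdy, h.fderiv_eq]

section imPart

variable {g : ℂ → ℂ} {z : ℝ × ℝ}

lemma fderiv_imPart_apply (hg : DifferentiableAt ℂ g (z.1 + z.2 * I)) (v : ℝ × ℝ) :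
    fderiv ℝ (imPart g) z v = (deriv g (z.1 + z.2 * I) * (v.1 + v.2 * I)).im := by
  have hφ : ∀ p : ℝ × ℝ, equivRealProdCLM.symm p = (p.1 : ℂ) + p.2 * I :=
    equivRealProdCLM_symm_apply
  have hcomp : HasFDerivAt (fun p : ℝ × ℝ => g (p.1 + p.2 * I))
      ((fderiv ℂ g (z.1 + z.2 * I)).restrictScalars ℝ ∘L
        equivRealProdCLM.symm.toContinuousLinearMap) z := by
    simp only [← hφ] at hg ⊢
    exact (hg.hasFDerivAt.restrictScalars ℝ).comp z equivRealProdCLM.symm.hasFDerivAt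
  have him : HasFDerivAt (imPart g) (imCLM ∘L ((fderiv ℂ g (z.1 + z.2 * I)).restrictScalars ℝ ∘L
      equivRealProdCLM.symm.toContinuousLinearMap)) z :=
    imCLM.hasFDerivAt.comp z hcomp
  rw [him.fderiv]
  simp [hφ, fderiv_eq_smul_deriv, mul_comm, add_comm]

lemma pdx_imPart (hg : DifferentiableAt ℂ g (z.1 + z.2 * I)) :
    pdx (imPart g) z = imPart (deriv g) z := by
  simp [pdx, fderiv_imPart_apply hg, imPart]

lemma pdy_imPart (hg : DifferentiableAt ℂ g (z.1 + z.2 * I)) :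
    pdy (imPart g) z = imPart (fun ζ => I * deriv g ζ) z := by
  simp [pdy, fderiv_imPart_apply hg, imPart, mul_comm]

lemma eventually_differentiableAt_of_analyticAt (hg : AnalyticAt ℂ g (z.1 + z.2 * I)) :
    ∀ᶠ p in 𝓝 z, DifferentiableAt ℂ g (p.1 + p.2 * I) := by
  have hφ : Continuous fun p : ℝ × ℝ => (p.1 : ℂ) + p.2 * I := by fun_prop
  exact (hφ.tendsto z).eventually
    (hg.eventually_analyticAt.mono fun _ h => h.differentiableAt)

lemma pdx_pdx_imPart (hg : AnalyticAt ℂ g (z.1 + z.2 * I)) :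
    pdx (pdx (imPart g)) z = (deriv (deriv g) (z.1 + z.2 * I)).im := by
  rw [pdx_congr ((eventually_differentiableAt_of_analyticAt hg).mono fun _ => pdx_imPart),
    pdx_imPart hg.deriv.differentiableAt, imPart]

lemma pdy_pdx_imPart (hg : AnalyticAt ℂ g (z.1 + z.2 * I)) :
    pdy (pdx (imPart g)) z = (deriv (deriv g) (z.1 + z.2 * I)).re := by
  rw [pdy_congr ((eventually_differentiableAt_of_analyticAt hg).mono fun _ => pdx_imPart),
    pdy_imPart hg.deriv.differentiableAt]
  simp [imPart]

lemma pdy_pdy_imPart (hg : AnalyticAt ℂ g (z.1 + z.2 * I)) :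
    pdy (pdy (imPart g)) z = -(deriv (deriv g) (z.1 + z.2 * I)).im := by
  have hg' : DifferentiableAt ℂ (fun ζ => I * deriv g ζ) (z.1 + z.2 * I) :=
    hg.deriv.differentiableAt.const_mul I
  rw [pdy_congr ((eventually_differentiableAt_of_analyticAt hg).mono fun _ => pdy_imPart),
    pdy_imPart hg', imPart, deriv_const_mul _ hg.deriv.differentiableAt]
  simp

theorem imPart_hessian_det (hg : AnalyticAt ℂ g (z.1 + z.2 * I)) :
    pdx (pdx (imPart g)) z * pdy (pdy (imPart g)) z - pdy (pdx (imPart g)) z ^ 2 =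
      -‖deriv (deriv g) (z.1 + z.2 * I)‖ ^ 2 := by
  rw [pdx_pdx_imPart hg, pdy_pdy_imPart hg, pdy_pdx_imPart hg, Complex.sq_norm,
    Complex.normSq_apply]
  ring

end imPart

/-- If `w` is complex analytic on an open set `U` and `u(x,y) = Im(w(x+iy))`,
then `u_xx·u_yy − u_xy² = −|w''|²`; in particular `u` solves the hyperbolic
Monge–Ampère equation `u_xx·u_yy − u_xy² + f² = 0` with `f = |w''|`. -/
theorem imPart_solves_monge_ampere
    (U : Set ℂ) (hU : IsOpen U) (w : ℂ → ℂ) (hw : DifferentiableOn ℂ w U) :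
    ∀ x y : ℝ, (x : ℂ) + (y : ℂ) * Complex.I ∈ U →
      pdx (pdx (imPart w)) (x, y) * pdy (pdy (imPart w)) (x, y) -
          pdy (pdx (imPart w)) (x, y) ^ 2 =
        -(‖deriv (deriv w) ((x : ℂ) + (y : ℂ) * Complex.I)‖ ^ 2) ∧
      pdx (pdx (imPart w)) (x, y) * pdy (pdy (imPart w)) (x, y) -
          pdy (pdx (imPart w)) (x, y) ^ 2 +
          ‖deriv (deriv w) ((x : ℂ) + (y : ℂ) * Complex.I)‖ ^ 2 = 0 := by
  intro x y hxy
  have hdet := imPart_hessian_det (z := (x, y)) (hw.analyticAt (hU.mem_nhds hxy))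
  exact ⟨hdet, by rw [hdet]; ring⟩
end
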